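/- Let F = 𝒫(𝔾) for a nonempty subset 𝔾 ⊆ G(p,V), and let 𝒫 ⊆ Sym²(V) be the positive semidefinite cone. Then F + Int 𝒫 = Int F, where Int denotes topological interior in Sym²(V). -/

import Mathlib

open Module RealInnerProductSpace Pointwise

noncomputable section

variable {V : Type*} [NormedAddCommGroup V] [InnerProductSpace ℝ V] [FiniteDimensional ℝ V]

/-- Orthogonal projection onto the subspace `W`, as an endomorphism of `V`. -/
def projCLM (W : Submodule ℝ V) : V →L[ℝ] V :=
  W.subtypeL.comp W.orthogonalProjectionOnto

/-- `tr_W A = tr (P_W ∘ A)`, the trace of the restriction of `A` to `W`. -/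
def trW (W : Submodule ℝ V) (A : V →L[ℝ] V) : ℝ :=
  LinearMap.trace ℝ V (((projCLM W).comp A : V →L[ℝ] V) : V →ₗ[ℝ] V)

/-- The subequation `𝒫(𝔾) ⊆ Sym²(V)`: self-adjoint endomorphisms `A` with
`tr_W A ≥ 0` for all `W ∈ 𝔾`. -/
def PG (𝔾 : Set (Submodule ℝ V)) : Set (selfAdjoint (V →L[ℝ] V)) :=
  {A | ∀ W ∈ 𝔾, 0 ≤ trW W (A : V →L[ℝ] V)}

/-- The positive semidefinite cone `𝒫 ⊆ Sym²(V)`. -/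
def posSA : Set (selfAdjoint (V →L[ℝ] V)) :=
  {A | ContinuousLinearMap.IsPositive (A : V →L[ℝ] V)}

/-- The identity `I` as an element of `Sym²(V)`. -/
def idSA : selfAdjoint (V →L[ℝ] V) := ⟨1, IsSelfAdjoint.one _⟩

/-!
`tr_W A` is the trace of the compression of `A` to `W`, which is positive semidefinite when `A`
is; so adding an element of `𝒫` only increases every `tr_W`, giving `F + 𝒫 ⊆ F`, and hence the open set `F + Int 𝒫` lies in `Int F`. Conversely, if `A ∈ Int F`
then `A - εI ∈ F` for small `ε > 0`, while `εI ∈ Int 𝒫`; so `A = (A - εI) + εI ∈ F + Int 𝒫`.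
-/

open Topology Set

theorem add_interior_eq_interior_of_add_subset {G : Type*} [TopologicalSpace G] [AddGroup G]
    [IsTopologicalAddGroup G] {F P : Set G} (hFP : F + P ⊆ F)
    (hP : (0 : G) ∈ closure (interior P)) :
    F + interior P = interior F := by
  refine Subset.antisymm
    (interior_maximal ((add_subset_add_left interior_subset).trans hFP) isOpen_interior.add_left)
    fun A hA => ?_
  have hnhds : {u | A - u ∈ interior F} ∈ 𝓝 (0 : G) :=
    (continuous_const.sub continuous_id).continuousAt.preimage_mem_nhds
      (by simpa using isOpen_interior.mem_nhds hA)
  obtain ⟨e, heF, heP⟩ := mem_closure_iff_nhds.1 hP _ hnhds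
  exact ⟨A - e, interior_subset heF, e, heP, sub_add_cancel A e⟩

theorem ContinuousLinearMap.isPositive_of_norm_sub_smul_one_le {E : Type*}
    [NormedAddCommGroup E] [InnerProductSpace ℝ E] {T : E →L[ℝ] E}
    (hT : (T : E →ₗ[ℝ] E).IsSymmetric) {c : ℝ} (h : ‖T - c • 1‖ ≤ c) : T.IsPositive := by
  refine (isPositive_iff T).2 ⟨hT, fun x => ?_⟩
  have hbound : -⟪(T - c • 1) x, x⟫ ≤ c * ‖x‖ ^ 2 :=
    calc -⟪(T - c • 1) x, x⟫ ≤ ‖(T - c • 1) x‖ * ‖x‖ :=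
          (neg_le_abs _).trans (abs_real_inner_le_norm _ _)
      _ ≤ ‖T - c • 1‖ * ‖x‖ * ‖x‖ := by gcongr; exact le_opNorm _ _
      _ ≤ c * ‖x‖ ^ 2 := by rw [mul_assoc, ← sq]; gcongr
  have hsplit : ⟪(T - c • 1) x, x⟫ = ⟪T x, x⟫ - c * ‖x‖ ^ 2 := by
    simp [inner_sub_left, real_inner_smul_left]
  linarith

theorem trW_eq_trace_compression (W : Submodule ℝ V) (A : V →L[ℝ] V) :
    trW W A = LinearMap.trace ℝ W
      ((W.orthogonalProjectionOnto ∘L A ∘L W.subtypeL : W →L[ℝ] W) : W →ₗ[ℝ] W) := by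
  rw [trW, projCLM, ContinuousLinearMap.comp_assoc]
  exact (LinearMap.trace_comp_comm' _ _).symm

theorem trW_add (W : Submodule ℝ V) (A B : V →L[ℝ] V) :
    trW W (A + B) = trW W A + trW W B := by
  simp only [trW, ContinuousLinearMap.comp_add, ContinuousLinearMap.toLinearMap_add, map_add]

theorem trW_nonneg_of_isPositive (W : Submodule ℝ V) {A : V →L[ℝ] V} (hA : A.IsPositive) :
    0 ≤ trW W A := by
  have hcompr := hA.adjoint_conj W.subtypeL
  rw [W.adjoint_subtypeL] at hcompr
  rw [trW_eq_trace_compression]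
  exact hcompr.toLinearMap.trace_nonneg

theorem PG_add_posSA_subset (𝔾 : Set (Submodule ℝ V)) : PG 𝔾 + posSA ⊆ PG 𝔾 := by
  rintro _ ⟨A, hA, P, hP, rfl⟩ W hW
  change 0 ≤ trW W ((A : V →L[ℝ] V) + P)
  rw [trW_add]
  exact add_nonneg (hA W hW) (trW_nonneg_of_isPositive W hP)

theorem smul_idSA_mem_interior_posSA {ε : ℝ} (hε : 0 < ε) :
    ε • idSA ∈ interior (posSA (V := V)) := by
  refine mem_interior.2 ⟨Metric.ball (ε • idSA) ε, fun B hB => ?_, Metric.isOpen_ball,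
    Metric.mem_ball_self hε⟩
  have hB' : dist (B : V →L[ℝ] V) (ε • 1) < ε := hB
  rw [dist_eq_norm] at hB'
  exact ContinuousLinearMap.isPositive_of_norm_sub_smul_one_le B.2.isSymmetric hB'.le

theorem zero_mem_closure_interior_posSA :
    (0 : selfAdjoint (V →L[ℝ] V)) ∈ closure (interior posSA) := by
  refine Metric.mem_closure_iff.2 fun δ hδ =>
    ⟨(δ / 2) • idSA, smul_idSA_mem_interior_posSA (half_pos hδ), ?_⟩
  have hdist : dist (0 : V →L[ℝ] V) ((δ / 2) • 1) ≤ δ / 2 := by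
    rw [dist_zero_left, norm_smul, Real.norm_of_nonneg (by positivity)]
    exact mul_le_of_le_one_right (by positivity) ContinuousLinearMap.norm_id_le
  exact hdist.trans_lt (half_lt_self hδ)

theorem statement3_general (𝔾 : Set (Submodule ℝ V)) :
    PG 𝔾 + interior (posSA (V := V)) = interior (PG 𝔾) :=
  add_interior_eq_interior_of_add_subset (PG_add_posSA_subset 𝔾) zero_mem_closure_interior_posSA

/-- `F + Int 𝒫 = Int F` for `F = 𝒫(𝔾)`. -/
theorem statement3 (p : ℕ) (𝔾 : Set (Submodule ℝ V)) (h𝔾 : 𝔾.Nonempty)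
    (hGr : ∀ W ∈ 𝔾, finrank ℝ W = p) :
    PG 𝔾 + interior (posSA (V := V)) = interior (PG 𝔾) :=
  statement3_general 𝔾
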